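/- Let X, Y, Z denote the 2×2 Pauli matrices and let α, β, γ be real numbers. Then every separable state σ on ℂ² ⊗ ℂ² satisfies |α·Tr((X⊗X)σ) + β·Tr((Y⊗Y)σ) + γ·Tr((Z⊗Z)σ)| ≤ max(|α|, |β|, |γ|). In particular, |Tr((X⊗X)σ)| + |Tr((Y⊗Y)σ)| + |Tr((Z⊗Z)σ)| ≤ 1 for every separable σ. -/

import Mathlib

/-! The Bloch vector `r = (tr(Xρ), tr(Yρ), tr(Zρ))` of a qubit state satisfies
`‖r‖² = (tr ρ)² - 4 det ρ ≤ 1`. On a product state `ρA ⊗ ρB` the Pauli correlations factor as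
`r_A,i r_B,i`, so their ℓ¹ norm is at most `‖r_A‖ ‖r_B‖ ≤ 1`. The ℓ¹ bound survives convex
combinations, and Hölder's inequality turns it into the bound on `α⟨X⊗X⟩ + β⟨Y⊗Y⟩ + γ⟨Z⊗Z⟩`. -/

open Matrix
open Kronecker
open scoped BigOperators ComplexOrder

/-- The Pauli matrix `X`. -/
def PauliX : Matrix (Fin 2) (Fin 2) ℂ := !![0, 1; 1, 0]

/-- The Pauli matrix `Y`. -/
def PauliY : Matrix (Fin 2) (Fin 2) ℂ := !![0, -Complex.I; Complex.I, 0]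

/-- The Pauli matrix `Z`. -/
def PauliZ : Matrix (Fin 2) (Fin 2) ℂ := !![1, 0; 0, -1]

/-- A density matrix: Hermitian, positive semidefinite, trace one. -/
def IsDensityMatrix {n : Type*} [Fintype n] (ρ : Matrix n n ℂ) : Prop :=
  ρ.IsHermitian ∧ ρ.PosSemidef ∧ ρ.trace = 1

/-- A separable state on `ℂ² ⊗ ℂ²`: a finite convex combination of Kronecker
products of 2×2 density matrices. -/
def IsSeparableState (σ : Matrix (Fin 2 × Fin 2) (Fin 2 × Fin 2) ℂ) : Prop :=
  ∃ (m : ℕ) (p : Fin m → ℝ) (ρA ρB : Fin m → Matrix (Fin 2) (Fin 2) ℂ),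
    (∀ k, 0 ≤ p k) ∧ (∑ k, p k = 1) ∧
    (∀ k, IsDensityMatrix (ρA k)) ∧ (∀ k, IsDensityMatrix (ρB k)) ∧
    σ = ∑ k, (p k : ℂ) • (ρA k ⊗ₖ ρB k)

lemma trace_pauliX_mul (ρ : Matrix (Fin 2) (Fin 2) ℂ) : (PauliX * ρ).trace = ρ 1 0 + ρ 0 1 := by
  simp [PauliX, trace_fin_two, vecMul, dotProduct]

lemma trace_pauliY_mul (ρ : Matrix (Fin 2) (Fin 2) ℂ) :
    (PauliY * ρ).trace = Complex.I * (ρ 0 1 - ρ 1 0) := by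
  simp [PauliY, trace_fin_two, vecMul, dotProduct, mul_sub, neg_add_eq_sub]

lemma trace_pauliZ_mul (ρ : Matrix (Fin 2) (Fin 2) ℂ) : (PauliZ * ρ).trace = ρ 0 0 - ρ 1 1 := by
  simp [PauliZ, trace_fin_two, vecMul, dotProduct, sub_eq_add_neg]

lemma Matrix.IsHermitian.sum_sq_norm_trace_pauli_mul {ρ : Matrix (Fin 2) (Fin 2) ℂ}
    (hρ : ρ.IsHermitian) :
    ‖(PauliX * ρ).trace‖ ^ 2 + ‖(PauliY * ρ).trace‖ ^ 2 + ‖(PauliZ * ρ).trace‖ ^ 2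
      = ‖ρ.trace‖ ^ 2 - 4 * ρ.det.re := by
  have h10 : ρ 1 0 = star (ρ 0 1) := by simpa using (hρ.apply 1 0).symm
  have h00 : (ρ 0 0).im = 0 := by simpa using (congrArg Complex.im (hρ.coe_re_apply_self 0)).symm
  have h11 : (ρ 1 1).im = 0 := by simpa using (congrArg Complex.im (hρ.coe_re_apply_self 1)).symm
  rw [trace_pauliX_mul, trace_pauliY_mul, trace_pauliZ_mul, trace_fin_two, det_fin_two, h10]
  simp only [Complex.sq_norm, Complex.normSq_apply, Complex.add_re, Complex.add_im,
    Complex.sub_re, Complex.sub_im, Complex.mul_re, Complex.mul_im, Complex.I_re, Complex.I_im,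
    RCLike.star_def, Complex.conj_re, Complex.conj_im, h00, h11]
  ring

lemma IsDensityMatrix.sum_sq_norm_trace_pauli_mul_le_one {ρ : Matrix (Fin 2) (Fin 2) ℂ}
    (hρ : IsDensityMatrix ρ) :
    ‖(PauliX * ρ).trace‖ ^ 2 + ‖(PauliY * ρ).trace‖ ^ 2 + ‖(PauliZ * ρ).trace‖ ^ 2 ≤ 1 := by
  obtain ⟨hH, hP, htr⟩ := hρ
  have hdet : 0 ≤ ρ.det.re := (Complex.nonneg_iff.mp hP.det_nonneg).1
  rw [hH.sum_sq_norm_trace_pauli_mul, htr, norm_one]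
  linarith

lemma mul_add_mul_add_mul_le_one {a₁ a₂ a₃ b₁ b₂ b₃ : ℝ} (ha : a₁ ^ 2 + a₂ ^ 2 + a₃ ^ 2 ≤ 1)
    (hb : b₁ ^ 2 + b₂ ^ 2 + b₃ ^ 2 ≤ 1) : a₁ * b₁ + a₂ * b₂ + a₃ * b₃ ≤ 1 := by
  nlinarith [sq_nonneg (a₁ - b₁), sq_nonneg (a₂ - b₂), sq_nonneg (a₃ - b₃)]

lemma Matrix.trace_kronecker_mul_kronecker {R m n : Type*} [CommSemiring R] [Fintype m]
    [Fintype n] (P A : Matrix m m R) (Q B : Matrix n n R) :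
    ((P ⊗ₖ Q) * (A ⊗ₖ B)).trace = (P * A).trace * (Q * B).trace := by
  rw [← mul_kronecker_mul, trace_kronecker]

lemma Matrix.trace_mul_sum_smul {R n ι : Type*} [CommSemiring R] [Fintype n] [Fintype ι]
    (M : Matrix n n R) (c : ι → R) (τ : ι → Matrix n n R) :
    (M * ∑ k, c k • τ k).trace = ∑ k, c k * (M * τ k).trace := by
  simp [Matrix.mul_sum, trace_sum, trace_smul]

lemma sum_norm_trace_pauli_mul_kronecker_le_one {ρA ρB : Matrix (Fin 2) (Fin 2) ℂ}
    (hA : IsDensityMatrix ρA) (hB : IsDensityMatrix ρB) :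
    ‖((PauliX ⊗ₖ PauliX) * (ρA ⊗ₖ ρB)).trace‖ + ‖((PauliY ⊗ₖ PauliY) * (ρA ⊗ₖ ρB)).trace‖
      + ‖((PauliZ ⊗ₖ PauliZ) * (ρA ⊗ₖ ρB)).trace‖ ≤ 1 := by
  simp only [trace_kronecker_mul_kronecker, norm_mul]
  exact mul_add_mul_add_mul_le_one hA.sum_sq_norm_trace_pauli_mul_le_one
    hB.sum_sq_norm_trace_pauli_mul_le_one

lemma norm_sum_add_norm_sum_add_norm_sum_le_one {ι : Type*} [Fintype ι] {p : ι → ℝ}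
    (hp : ∀ k, 0 ≤ p k) (hs : ∑ k, p k = 1) {a b c : ι → ℂ}
    (h : ∀ k, ‖a k‖ + ‖b k‖ + ‖c k‖ ≤ 1) :
    ‖∑ k, (p k : ℂ) * a k‖ + ‖∑ k, (p k : ℂ) * b k‖ + ‖∑ k, (p k : ℂ) * c k‖ ≤ 1 := by
  have hnorm (f : ι → ℂ) : ‖∑ k, (p k : ℂ) * f k‖ ≤ ∑ k, p k * ‖f k‖ :=
    (norm_sum_le _ _).trans_eq (by simp [abs_of_nonneg (hp _)])
  calc _ ≤ ∑ k, p k * ‖a k‖ + ∑ k, p k * ‖b k‖ + ∑ k, p k * ‖c k‖ := by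
        gcongr <;> exact hnorm _
    _ = ∑ k, p k * (‖a k‖ + ‖b k‖ + ‖c k‖) := by simp only [mul_add, Finset.sum_add_distrib]
    _ ≤ ∑ k, p k * 1 := by gcongr with k; exacts [hp k, h k]
    _ = 1 := by simp [hs]

lemma IsSeparableState.sum_norm_trace_pauli_mul_le_one
    {σ : Matrix (Fin 2 × Fin 2) (Fin 2 × Fin 2) ℂ} (hσ : IsSeparableState σ) :
    ‖((PauliX ⊗ₖ PauliX) * σ).trace‖ + ‖((PauliY ⊗ₖ PauliY) * σ).trace‖
      + ‖((PauliZ ⊗ₖ PauliZ) * σ).trace‖ ≤ 1 := by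
  obtain ⟨m, p, ρA, ρB, hp, hs, hA, hB, rfl⟩ := hσ
  simp only [trace_mul_sum_smul]
  exact norm_sum_add_norm_sum_add_norm_sum_le_one hp hs
    fun k => sum_norm_trace_pauli_mul_kronecker_le_one (hA k) (hB k)

lemma norm_ofReal_mul_add_ofReal_mul_add_ofReal_mul_le (α β γ : ℝ) (a b c : ℂ) :
    ‖(α : ℂ) * a + (β : ℂ) * b + (γ : ℂ) * c‖ ≤ max (max |α| |β|) |γ| * (‖a‖ + ‖b‖ + ‖c‖) := by
  set M := max (max |α| |β|) |γ|
  calc _ ≤ |α| * ‖a‖ + |β| * ‖b‖ + |γ| * ‖c‖ := by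
        refine norm_add₃_le.trans_eq ?_
        simp only [norm_mul, Complex.norm_real, Real.norm_eq_abs]
    _ ≤ M * ‖a‖ + M * ‖b‖ + M * ‖c‖ := by
        gcongr
        exacts [le_max_of_le_left (le_max_left _ _), le_max_of_le_left (le_max_right _ _),
          le_max_right _ _]
    _ = M * (‖a‖ + ‖b‖ + ‖c‖) := by ring

/-- For real `α, β, γ`, every separable two-qubit state `σ` satisfies
`|α⟨X⊗X⟩_σ + β⟨Y⊗Y⟩_σ + γ⟨Z⊗Z⟩_σ| ≤ max(|α|,|β|,|γ|)`; in particular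
`|⟨X⊗X⟩_σ| + |⟨Y⊗Y⟩_σ| + |⟨Z⊗Z⟩_σ| ≤ 1`. -/
theorem stmt7 (α β γ : ℝ)
    (σ : Matrix (Fin 2 × Fin 2) (Fin 2 × Fin 2) ℂ) (hσ : IsSeparableState σ) :
    ‖(α : ℂ) * ((PauliX ⊗ₖ PauliX) * σ).trace
        + (β : ℂ) * ((PauliY ⊗ₖ PauliY) * σ).trace
        + (γ : ℂ) * ((PauliZ ⊗ₖ PauliZ) * σ).trace‖ ≤ max (max |α| |β|) |γ| ∧
    ‖((PauliX ⊗ₖ PauliX) * σ).trace‖ + ‖((PauliY ⊗ₖ PauliY) * σ).trace‖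
        + ‖((PauliZ ⊗ₖ PauliZ) * σ).trace‖ ≤ 1 := by
  have hcorr := hσ.sum_norm_trace_pauli_mul_le_one
  refine ⟨(norm_ofReal_mul_add_ofReal_mul_add_ofReal_mul_le α β γ _ _ _).trans ?_, hcorr⟩
  exact mul_le_of_le_one_right ((abs_nonneg γ).trans (le_max_right _ _)) hcorr
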